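/- arXiv:2102.11854 — 4 statements merged into one kernel-verified Lean document; each statement's English description precedes it below -/
import Mathlib

section
/- Let f : {0,1}^{2n} → {0,1} and f' : {0,1}^{2n-1} → {0,1} be monotone Boolean functions such that f' is the minor of f with respect to π₁ : [2n] → [2n-1] defined by π₁(i) = max(i-1, 1) (identifying the first two coordinates of f). If Φ_f(1) ≥ λ, then Φ_{f'}(1) ≥ λ/2. -/
/-!
Let `π : [m] → [m - 1]` identify `b` with `i` and be injective elsewhere. Merging `b` into `i`
can only help `i`: in fact `Φ_f(i) ≤ Φ_{f'}(π i)`.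
From an order `σ` of the `m` coordinates of `f`, delete the step at which `b` is switched on
and relabel the rest by `π`; this gives an order of the `m - 1` coordinates of `f'`, and `σ` is
recovered from it together with the position of `b`, so the map is at most `m`-to-one. If `i` is
pivotal along `σ`, then `π i` is pivotal along the new order: pulled back along `π`, its prefix
before `π i` is the old prefix before `i` without `b`, and its prefix through `π i` is the old
prefix through `i` with `b` added, so monotonicity of `f` settles both values. Since
`m! = m · (m - 1)!`, the counts give the inequality of Shapley values.
-/

open Finset

/-- A Boolean function on subsets of `Fin m` is monotone. -/
def MonotoneB {m : ℕ} (f : Finset (Fin m) → Bool) : Prop :=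
  ∀ S T : Finset (Fin m), S ⊆ T → f S = true → f T = true

/-- The boundary of coordinate `i`: sets `S` not containing `i` with
`f (S ∪ {i}) = 1` and `f S = 0`. -/
def boundary {m : ℕ} (f : Finset (Fin m) → Bool) (i : Fin m) : Finset (Finset (Fin m)) :=
  Finset.univ.filter (fun S => i ∉ S ∧ f (insert i S) = true ∧ f S = false)

/-- `mu f i j` : the fraction of size-`j` subsets of `[m] \ {i}` lying in the
boundary of coordinate `i`. -/
def mu {m : ℕ} (f : Finset (Fin m) → Bool) (i : Fin m) (j : ℕ) : ℚ :=
  (((boundary f i).filter (fun S => S.card = j)).card : ℚ) / (((m - 1).choose j : ℕ) : ℚ)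

/-- The Shapley value of coordinate `i` of `f` : the probability over a uniformly
random permutation `σ` that `i` is the pivotal coordinate on the increasing path
`∅ = P₀ ⊂ P₁ ⊂ ⋯ ⊂ Pₘ = univ` given by `σ`. -/
def shapley {m : ℕ} (f : Finset (Fin m) → Bool) (i : Fin m) : ℚ :=
  (((Finset.univ : Finset (Equiv.Perm (Fin m))).filter (fun σ =>
    ∃ j : Fin m, σ j = i ∧
      f ((Finset.univ.filter (fun k => k < j)).image (fun k => σ k)) = false ∧
      f ((Finset.univ.filter (fun k => k ≤ j)).image (fun k => σ k)) = true)).card : ℚ)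
    / ((Nat.factorial m : ℕ) : ℚ)

/-- `g` is the minor of `f` with respect to `π`. -/
def minorOf {m k : ℕ} (g : Finset (Fin k) → Bool) (f : Finset (Fin m) → Bool)
    (π : Fin m → Fin k) : Prop :=
  ∀ S : Finset (Fin k), g S = f (Finset.univ.filter (fun i => π i ∈ S))

/-- The minor of `f` with respect to `π`, as a function. -/
def minorFun {m k : ℕ} (f : Finset (Fin m) → Bool) (π : Fin m → Fin k) :
    Finset (Fin k) → Bool :=
  fun S => f (Finset.univ.filter (fun i => π i ∈ S))

/-- The map `π₁ : [2n] → [2n-1]` identifying the first two coordinates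
(`π₁(i) = max(i-1,1)` in 1-indexed notation). -/
def pi1 (n : ℕ) (hn : 0 < n) : Fin (2*n) → Fin (2*n-1) :=
  fun i => ⟨i.val - 1, by have := i.isLt; omega⟩

open Equiv Nat

section

variable {m : ℕ}

lemma MonotoneB.eq_false_of_subset {f : Finset (Fin m) → Bool} (hf : MonotoneB f)
    {S T : Finset (Fin m)} (hST : S ⊆ T) (hT : f T = false) : f S = false := by
  cases hS : f S
  · rfl
  · simpa [hT] using hf S T hST hS

lemma shapley_nonneg (f : Finset (Fin m) → Bool) (i : Fin m) : 0 ≤ shapley f i := by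
  unfold shapley
  positivity

def pivotalPerms (f : Finset (Fin m) → Bool) (i : Fin m) : Finset (Perm (Fin m)) :=
  univ.filter fun σ => ∃ j : Fin m, σ j = i ∧
    f ((univ.filter (fun k => k < j)).image (fun k => σ k)) = false ∧
    f ((univ.filter (fun k => k ≤ j)).image (fun k => σ k)) = true

lemma shapley_eq_card_pivotalPerms (f : Finset (Fin m) → Bool) (i : Fin m) :
    shapley f i = #(pivotalPerms f i) / m ! :=
  rfl

def skipPos (p : Fin m) : Fin (m - 1) ↪o Fin m :=
  (univ.erase p).orderEmbOfFin (by simp [card_erase_of_mem])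

lemma skipPos_ne (p : Fin m) (k : Fin (m - 1)) : skipPos p k ≠ p := by
  have := (univ.erase p).orderEmbOfFin_mem (by simp [card_erase_of_mem]) k
  exact (mem_erase.1 this).1

lemma exists_skipPos_eq {p x : Fin m} (hx : x ≠ p) : ∃ k, skipPos p k = x := by
  have : x ∈ Set.range (skipPos p) := by
    rw [skipPos, range_orderEmbOfFin]
    simpa using hx
  exact this

lemma image_skipPos_filter_lt (p : Fin m) (k : Fin (m - 1)) :
    (univ.filter (· < k)).image (skipPos p) = (univ.filter (· < skipPos p k)).erase p := by
  ext x
  simp only [mem_image, mem_filter, mem_univ, true_and, mem_erase]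
  constructor
  · rintro ⟨l, hl, rfl⟩
    exact ⟨skipPos_ne p l, (skipPos p).lt_iff_lt.2 hl⟩
  · rintro ⟨hxp, hx⟩
    obtain ⟨l, rfl⟩ := exists_skipPos_eq hxp
    exact ⟨l, (skipPos p).lt_iff_lt.1 hx, rfl⟩

lemma image_skipPos_filter_le (p : Fin m) (k : Fin (m - 1)) :
    (univ.filter (· ≤ k)).image (skipPos p) = (univ.filter (· ≤ skipPos p k)).erase p := by
  ext x
  simp only [mem_image, mem_filter, mem_univ, true_and, mem_erase]
  constructor
  · rintro ⟨l, hl, rfl⟩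
    exact ⟨skipPos_ne p l, (skipPos p).le_iff_le.2 hl⟩
  · rintro ⟨hxp, hx⟩
    obtain ⟨l, rfl⟩ := exists_skipPos_eq hxp
    exact ⟨l, (skipPos p).le_iff_le.1 hx, rfl⟩

variable {π : Fin m → Fin (m - 1)} {b i : Fin m}

lemma apply_skipPos_symm_ne (σ : Perm (Fin m)) (k : Fin (m - 1)) :
    σ (skipPos (σ.symm b) k) ≠ b := by
  rw [Ne, ← eq_symm_apply]
  exact skipPos_ne _ k

noncomputable def mergePerm (hπ : Set.InjOn π {b}ᶜ) (σ : Perm (Fin m)) : Perm (Fin (m - 1)) :=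
  Equiv.ofBijective (fun k => π (σ (skipPos (σ.symm b) k))) <|
    Finite.injective_iff_bijective.mp fun k l hkl => (skipPos _).injective <| σ.injective <|
      hπ (apply_skipPos_symm_ne σ k) (apply_skipPos_symm_ne σ l) hkl

lemma mergePerm_apply (hπ : Set.InjOn π {b}ᶜ) (σ : Perm (Fin m)) (k : Fin (m - 1)) :
    mergePerm hπ σ k = π (σ (skipPos (σ.symm b) k)) :=
  rfl

lemma image_erase_symm_apply {σ : Perm (Fin m)} (s : Finset (Fin m)) :
    (s.erase (σ.symm b)).image σ = (s.image σ).erase b := by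
  rw [image_erase σ.injective, apply_symm_apply]

lemma mergePerm_prod_injective (hπ : Set.InjOn π {b}ᶜ) :
    Function.Injective fun σ : Perm (Fin m) => (mergePerm hπ σ, σ.symm b) := by
  intro σ₁ σ₂ h
  obtain ⟨hmerge, hpos⟩ := Prod.mk.inj h
  ext x
  by_cases hx : x = σ₁.symm b
  · rw [hx, apply_symm_apply, hpos, apply_symm_apply]
  obtain ⟨k, rfl⟩ := exists_skipPos_eq hx
  have hk := DFunLike.congr_fun hmerge k
  rw [mergePerm_apply, mergePerm_apply, ← hpos] at hk
  have hne₂ := apply_skipPos_symm_ne (b := b) σ₂ k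
  rw [← hpos] at hne₂
  exact congrArg Fin.val (hπ (apply_skipPos_symm_ne σ₁ k) hne₂ hk)

lemma image_mergePerm_filter_lt (hπ : Set.InjOn π {b}ᶜ) (σ : Perm (Fin m)) (k : Fin (m - 1)) :
    (univ.filter (· < k)).image (mergePerm hπ σ)
      = (((univ.filter (· < skipPos (σ.symm b) k)).image σ).erase b).image π := by
  rw [← image_erase_symm_apply, ← image_skipPos_filter_lt, image_image, image_image]
  rfl

lemma image_mergePerm_filter_le (hπ : Set.InjOn π {b}ᶜ) (σ : Perm (Fin m)) (k : Fin (m - 1)) :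
    (univ.filter (· ≤ k)).image (mergePerm hπ σ)
      = (((univ.filter (· ≤ skipPos (σ.symm b) k)).image σ).erase b).image π := by
  rw [← image_erase_symm_apply, ← image_skipPos_filter_le, image_image, image_image]
  rfl

section

variable (hπ : Set.InjOn π {b}ᶜ) (hπb : π b = π i) (hbi : b ≠ i) {T : Finset (Fin m)}
include hπ hπb hbi

lemma mem_image_iff_of_notMem (hbT : b ∉ T) (x : Fin m) :
    π x ∈ T.image π ↔ x ∈ T ∨ x = b ∧ i ∈ T := by
  have hne : ∀ t ∈ T, t ≠ b := fun t ht htb => hbT (htb ▸ ht)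
  rw [mem_image]
  constructor
  · rintro ⟨t, ht, htx⟩
    by_cases hxb : x = b
    · subst hxb
      have hti : t = i := hπ (hne t ht) hbi.symm (htx.trans hπb)
      exact Or.inr ⟨rfl, hti ▸ ht⟩
    · exact Or.inl (hπ (hne t ht) hxb htx ▸ ht)
  · rintro (hx | ⟨rfl, hi⟩)
    · exact ⟨x, hx, rfl⟩
    · exact ⟨i, hi, hπb.symm⟩

lemma filter_mem_image_of_notMem (hbT : b ∉ T) (hiT : i ∉ T) :
    univ.filter (fun x => π x ∈ T.image π) = T := by
  ext x
  simp [mem_image_iff_of_notMem hπ hπb hbi hbT, hiT]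

lemma filter_mem_image_of_mem (hbT : b ∉ T) (hiT : i ∈ T) :
    univ.filter (fun x => π x ∈ T.image π) = insert b T := by
  ext x
  simp [mem_image_iff_of_notMem hπ hπb hbi hbT, hiT, or_comm]

lemma mergePerm_mem_pivotalPerms {f : Finset (Fin m) → Bool} {f' : Finset (Fin (m - 1)) → Bool}
    (hf : MonotoneB f) (hminor : minorOf f' f π) {σ : Perm (Fin m)}
    (hσ : σ ∈ pivotalPerms f i) : mergePerm hπ σ ∈ pivotalPerms f' (π i) := by
  simp only [pivotalPerms, mem_filter, mem_univ, true_and] at hσ ⊢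
  obtain ⟨j, hj, hlt, hle⟩ := hσ
  obtain ⟨k, rfl⟩ := exists_skipPos_eq (p := σ.symm b) (by
    rw [Ne, eq_symm_apply, hj]
    exact hbi.symm)
  have hi_lt : i ∉ (univ.filter (· < skipPos (σ.symm b) k)).image σ := by
    simp only [mem_image, mem_filter, mem_univ, true_and, not_exists, not_and]
    rintro x hx hxi
    exact hx.ne (σ.injective (hxi.trans hj.symm))
  have hi_le : i ∈ (univ.filter (· ≤ skipPos (σ.symm b) k)).image σ :=
    mem_image.2 ⟨_, by simp, hj⟩
  refine ⟨k, by rw [mergePerm_apply, hj], ?_, ?_⟩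
  · rw [image_mergePerm_filter_lt, hminor,
      filter_mem_image_of_notMem hπ hπb hbi (notMem_erase _ _)
        (fun h => hi_lt (mem_of_mem_erase h))]
    exact hf.eq_false_of_subset (erase_subset _ _) hlt
  · rw [image_mergePerm_filter_le, hminor,
      filter_mem_image_of_mem hπ hπb hbi (notMem_erase _ _) (mem_erase.2 ⟨hbi.symm, hi_le⟩)]
    exact hf _ _ (insert_erase_subset _ _) hle

lemma card_pivotalPerms_le {f : Finset (Fin m) → Bool} {f' : Finset (Fin (m - 1)) → Bool}
    (hf : MonotoneB f) (hminor : minorOf f' f π) :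
    #(pivotalPerms f i) ≤ #(pivotalPerms f' (π i)) * m := by
  calc #(pivotalPerms f i)
      ≤ #(pivotalPerms f' (π i) ×ˢ (univ : Finset (Fin m))) :=
        card_le_card_of_injOn _
          (fun σ hσ => mem_product.2
            ⟨mergePerm_mem_pivotalPerms hπ hπb hbi hf hminor hσ, mem_univ _⟩)
          (mergePerm_prod_injective hπ).injOn
    _ = #(pivotalPerms f' (π i)) * m := by simp

theorem shapley_le_of_minorOf {f : Finset (Fin m) → Bool} {f' : Finset (Fin (m - 1)) → Bool}
    (hf : MonotoneB f) (hminor : minorOf f' f π) : shapley f i ≤ shapley f' (π i) := by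
  have hm : m ≠ 0 := i.pos.ne'
  have hcard : (#(pivotalPerms f i) : ℚ) ≤ #(pivotalPerms f' (π i)) * m := by
    exact_mod_cast card_pivotalPerms_le hπ hπb hbi hf hminor
  rw [shapley_eq_card_pivotalPerms, shapley_eq_card_pivotalPerms, ← mul_factorial_pred hm,
    Nat.cast_mul, div_le_div_iff₀ (by positivity) (by positivity)]
  calc (#(pivotalPerms f i) : ℚ) * (m - 1)! ≤ #(pivotalPerms f' (π i)) * m * (m - 1)! := by
        gcongr
    _ = #(pivotalPerms f' (π i)) * (m * (m - 1)!) := by ring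

end

end

lemma pi1_injOn (n : ℕ) (hn : 0 < n) : Set.InjOn (pi1 n hn) {⟨1, by omega⟩}ᶜ := by
  intro x hx y hy hxy
  have hx1 : x.val ≠ 1 := fun h => hx (Fin.ext h)
  have hy1 : y.val ≠ 1 := fun h => hy (Fin.ext h)
  have hval : x.val - 1 = y.val - 1 := congrArg Fin.val hxy
  exact Fin.ext (by omega)

/-- If `f'` is the minor of `f` identifying the first two coordinates and
coordinate 1 of `f` has Shapley value at least `λ`, then coordinate 1 of `f'`
has Shapley value at least `λ/2`. -/
theorem shapley_identify_minor (n : ℕ) (hn : 0 < n)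
    (f : Finset (Fin (2*n)) → Bool) (f' : Finset (Fin (2*n-1)) → Bool)
    (hf : MonotoneB f)
    (hminor : minorOf f' f (pi1 n hn)) (lam : ℚ)
    (hlam : lam ≤ shapley f ⟨0, by omega⟩) :
    lam / 2 ≤ shapley f' ⟨0, by omega⟩ := by
  have hmerge := shapley_le_of_minorOf (i := ⟨0, by omega⟩) (pi1_injOn n hn) rfl
    (by simp [Fin.ext_iff]) hf hminor
  have hπ0 : pi1 n hn ⟨0, by omega⟩ = ⟨0, by omega⟩ := rfl
  rw [hπ0] at hmerge
  have := shapley_nonneg f' ⟨0, by omega⟩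
  linarith
end

section
/- Let f : {0,1}^n → {0,1} be a monotone Boolean function with P_{1/L}(f) ≥ 1 − 1/(2L) and f(0,…,0) = 0, where L ≥ 2 and P_p(f) is the probability that f = 1 under the product measure with bias p. Then the threshold function THR_{L,1} (OR on L variables) is a minor of f, i.e., there exists π : [n] → [L] with f(x_{π(1)},…,x_{π(n)}) = THR_{L,1}(x₁,…,x_L) for all x. -/
open Finset

/-- `Pp f p` : the probability that `f = 1` under the `p`-biased product
measure on `{0,1}^m`. -/
noncomputable def Pp {m : ℕ} (f : Finset (Fin m) → Bool) (p : ℝ) : ℝ :=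
  ∑ S : Finset (Fin m), if f S = true then p ^ S.card * (1 - p) ^ (m - S.card) else 0

/-- The threshold function `THR_{L,τ}` : `1` iff the Hamming weight is at least `τ`. -/
def thr (L τ : ℕ) : Finset (Fin L) → Bool := fun S => decide (τ ≤ S.card)


/-! Under a uniformly random `π : Fin m → Fin L` each fibre `π⁻¹ j` is a `1/L`-biased random
subset of `Fin m`, so `f` vanishes on it with probability `1 - P_{1/L}(f) ≤ 1/(2L)`. A union bound
over the `L` fibres gives some `π` with `f = 1` on every fibre; monotonicity and `f ∅ = 0` then
force the minor of `f` along `π` to be the OR. -/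

section Fibers

variable {ι α : Type*} [Fintype ι] [DecidableEq ι] [Fintype α] [DecidableEq α]

theorem filter_fiber_eq_piFinset (j : α) (S : Finset ι) :
    univ.filter (fun π : ι → α => univ.filter (π · = j) = S) =
      Fintype.piFinset (fun i => if i ∈ S then {j} else {j}ᶜ) := by
  ext π
  simp only [mem_filter, mem_univ, true_and, Fintype.mem_piFinset, Finset.ext_iff]
  refine forall_congr' fun i => ?_
  split_ifs with hi <;> simp [hi]

theorem card_filter_fiber_eq (j : α) (S : Finset ι) :
    #{π : ι → α | univ.filter (π · = j) = S} = (Fintype.card α - 1) ^ (Fintype.card ι - #S) := by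
  rw [filter_fiber_eq_piFinset, Fintype.card_piFinset]
  simp_rw [apply_ite Finset.card, card_singleton, card_compl, card_singleton]
  rw [prod_ite, prod_const_one, one_mul, prod_const, filter_not,
    card_sdiff_of_subset (filter_subset _ _)]
  simp

end Fibers

theorem pow_mul_one_div_pow_mul_one_sub_pow {L : ℕ} (hL : 0 < L) {m k : ℕ} (hk : k ≤ m) :
    (L : ℝ) ^ m * ((1 / L) ^ k * (1 - 1 / L) ^ (m - k)) = ((L - 1) ^ (m - k) : ℕ) := by
  have hL' : (L : ℝ) ≠ 0 := by positivity
  rw [Nat.cast_pow, Nat.cast_sub hL, ← Nat.add_sub_cancel' hk, pow_add, Nat.add_sub_cancel_left,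
    one_sub_div hL', div_pow, div_pow, one_pow]
  field_simp
  simp

theorem pow_mul_Pp_inv_eq_card {m L : ℕ} (hL : 0 < L) (f : Finset (Fin m) → Bool) (j : Fin L) :
    (L : ℝ) ^ m * Pp f (1 / L) = #{π : Fin m → Fin L | f (univ.filter (π · = j)) = true} := by
  rw [card_eq_sum_card_fiberwise (f := fun π => univ.filter (π · = j))
    (t := univ.filter (f · = true)) (fun π hπ => by simpa using hπ)]
  rw [Pp, ← sum_filter, mul_sum, Nat.cast_sum]
  refine sum_congr rfl fun S hS => ?_
  have hfS : f S = true := (mem_filter.mp hS).2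
  rw [pow_mul_one_div_pow_mul_one_sub_pow hL (by simpa using card_le_univ S), filter_filter]
  calc (((L - 1) ^ (m - #S) : ℕ) : ℝ) = #{π : Fin m → Fin L | univ.filter (π · = j) = S} := by
        simp [card_filter_fiber_eq]
    _ = _ := by
        congr 2
        exact filter_congr fun π _ => ⟨fun h => ⟨h ▸ hfS, h⟩, And.right⟩

theorem card_filter_not_eq_pow_mul_one_sub_Pp {m L : ℕ} (hL : 0 < L)
    (f : Finset (Fin m) → Bool) (j : Fin L) :
    (#{π : Fin m → Fin L | ¬f (univ.filter (π · = j)) = true} : ℝ) =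
      (L : ℝ) ^ m * (1 - Pp f (1 / L)) := by
  have hsplit := card_filter_add_card_filter_not (s := univ)
    (fun π : Fin m → Fin L => f (univ.filter (π · = j)) = true)
  rw [card_univ, Fintype.card_fun, Fintype.card_fin, Fintype.card_fin] at hsplit
  rw [mul_one_sub, pow_mul_Pp_inv_eq_card hL f j, eq_sub_iff_add_eq']
  exact_mod_cast hsplit

theorem exists_forall_of_sum_card_filter_not_lt {α β : Type*} [Fintype α] [Fintype β]
    (P : β → α → Prop) [∀ j x, Decidable (P j x)]
    (h : ∑ j, #{x | ¬P j x} < Fintype.card α) : ∃ x, ∀ j, P j x := by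
  classical
  by_contra! hbad
  have hcover : (univ : Finset α) ⊆ univ.biUnion fun j => {x | ¬P j x} := fun x _ => by
    obtain ⟨j, hj⟩ := hbad x
    simpa using ⟨j, hj⟩
  exact h.not_ge ((card_le_card hcover).trans card_biUnion_le)

theorem minorOf_thr_one_of_fibers {m L : ℕ} {f : Finset (Fin m) → Bool} {π : Fin m → Fin L}
    (hf : MonotoneB f) (h0 : f ∅ = false) (hπ : ∀ j, f (univ.filter (π · = j)) = true) :
    minorOf (thr L 1) f π := by
  intro S
  rcases S.eq_empty_or_nonempty with rfl | ⟨j, hj⟩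
  · simp [thr, h0]
  · have hsub : univ.filter (π · = j) ⊆ univ.filter (π · ∈ S) := by
      intro i
      simp only [mem_filter, mem_univ, true_and]
      exact fun hi => hi ▸ hj
    simpa [thr, hf _ _ hsub (hπ j)] using ⟨j, hj⟩

/-- If `P_{1/L}(f) ≥ 1 - 1/(2L)` and `f(0,…,0) = 0`, then `THR_{L,1}` (the
`L`-variable OR) is a minor of `f`. -/
theorem or_minor (m L : ℕ) (hL : 2 ≤ L) (f : Finset (Fin m) → Bool)
    (hf : MonotoneB f) (h0 : f ∅ = false)
    (hp : 1 - 1 / (2 * (L : ℝ)) ≤ Pp f (1 / (L : ℝ))) :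
    ∃ π : Fin m → Fin L, minorOf (thr L 1) f π := by
  have hL0 : 0 < L := by omega
  have hLpos : (0 : ℝ) < L := by exact_mod_cast hL0
  obtain ⟨π, hπ⟩ : ∃ π : Fin m → Fin L, ∀ j, f (univ.filter (π · = j)) = true := by
    refine exists_forall_of_sum_card_filter_not_lt _ ?_
    have hbad (j : Fin L) : (#{π : Fin m → Fin L | ¬f (univ.filter (π · = j)) = true} : ℝ) ≤
        (L : ℝ) ^ m * (1 / (2 * L)) := by
      rw [card_filter_not_eq_pow_mul_one_sub_Pp hL0]
      exact mul_le_mul_of_nonneg_left (by linarith) (by positivity)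
    suffices (∑ j : Fin L, #{π : Fin m → Fin L | ¬f (univ.filter (π · = j)) = true} : ℝ) <
        (L : ℝ) ^ m by
      rw [Fintype.card_fun, Fintype.card_fin, Fintype.card_fin]
      exact_mod_cast this
    calc _ ≤ ∑ _j : Fin L, (L : ℝ) ^ m * (1 / (2 * L)) := sum_le_sum fun j _ => hbad j
      _ = (L : ℝ) ^ m / 2 := by
        simp only [sum_const, card_univ, Fintype.card_fin, nsmul_eq_mul]
        field_simp
      _ < (L : ℝ) ^ m := by linarith [pow_pos hLpos m]
  exact ⟨π, minorOf_thr_one_of_fibers hf h0 hπ⟩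
end

section
/- Let L' ≥ 1 and τ ∈ [L'], and let f : {0,1}^n → {0,1} be a monotone Boolean function with P_{τ/L'}(f) > 1 − 2^{−(L'+1)} and P_{(τ−1)/L'}(f) < 2^{−(L'+1)}. Then THR_{L',τ} is a minor of f. -/
open Finset

def pre {m L' : ℕ} (π : Fin m → Fin L') (S : Finset (Fin L')) : Finset (Fin m) :=
  Finset.univ.filter (fun i => π i ∈ S)

lemma pre_mono {m L' : ℕ} (π : Fin m → Fin L') {S T : Finset (Fin L')} (h : S ⊆ T) :
    pre π S ⊆ pre π T := by
  intro i hi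
  simp only [pre, mem_filter, mem_univ, true_and] at *
  exact h hi

lemma count_preim {m L' : ℕ} (S : Finset (Fin L')) (T : Finset (Fin m)) :
    (Finset.univ.filter (fun π : Fin m → Fin L' => pre π S = T)).card
      = S.card ^ T.card * (L' - S.card) ^ (m - T.card) := by
  have hset : Finset.univ.filter (fun π : Fin m → Fin L' => pre π S = T)
      = Fintype.piFinset (fun i : Fin m => if i ∈ T then S else Sᶜ) := by
    ext π
    simp only [mem_filter, mem_univ, true_and, Fintype.mem_piFinset, pre, Finset.ext_iff]
    refine forall_congr' (fun i => ?_)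
    by_cases hi : i ∈ T <;> simp [hi]
  rw [hset, Fintype.card_piFinset]
  have : ∀ i : Fin m, (if i ∈ T then S else Sᶜ).card
      = (if i ∈ T then S.card else L' - S.card) := by
    intro i; by_cases hi : i ∈ T <;> simp [hi, Finset.card_compl]
  simp only [this]
  rw [Finset.prod_ite, Finset.prod_const, Finset.prod_const]
  congr 1
  · congr 1; simp [Finset.filter_mem_eq_inter]
  · congr 1
    have : Finset.univ.filter (fun i => ¬ i ∈ T) = Tᶜ := by ext i; simp
    rw [this, Finset.card_compl, Fintype.card_fin]

lemma count_true {m L' : ℕ} (hL : 1 ≤ L') (f : Finset (Fin m) → Bool) (S : Finset (Fin L')) :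
    ((Finset.univ.filter (fun π : Fin m → Fin L' => f (pre π S) = true)).card : ℝ)
      = Pp f ((S.card : ℝ) / (L' : ℝ)) * (L' : ℝ) ^ m := by
  have hL0 : (L' : ℝ) ≠ 0 := by positivity
  have hs : S.card ≤ L' := by
    simpa using Finset.card_le_card (Finset.subset_univ S)
  have hnat : (Finset.univ.filter (fun π : Fin m → Fin L' => f (pre π S) = true)).card
      = ∑ T : Finset (Fin m),
          if f T = true then S.card ^ T.card * (L' - S.card) ^ (m - T.card) else 0 := by
    rw [Finset.card_eq_sum_card_fiberwise
      (f := fun π : Fin m → Fin L' => pre π S)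
      (t := (Finset.univ : Finset (Finset (Fin m)))) (fun x _ => Finset.mem_univ _)]
    refine Finset.sum_congr rfl (fun T _ => ?_)
    rw [Finset.filter_filter]
    by_cases hT : f T = true
    · rw [if_pos hT, ← count_preim S T]
      congr 1
      ext π
      simp only [mem_filter, mem_univ, true_and]
      constructor
      · rintro ⟨_, h⟩; exact h
      · rintro h; exact ⟨by rw [h]; exact hT, h⟩
    · rw [if_neg hT]
      rw [Finset.card_eq_zero, Finset.filter_eq_empty_iff]
      rintro π - ⟨h1, h2⟩
      exact hT (h2 ▸ h1)
  rw [hnat]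
  rw [Pp, Finset.sum_mul]
  push_cast
  refine Finset.sum_congr rfl (fun T _ => ?_)
  by_cases hT : f T = true
  · rw [if_pos hT, if_pos hT]
    have ht : T.card ≤ m := by simpa using Finset.card_le_card (Finset.subset_univ T)
    have h1p : 1 - (S.card : ℝ) / L' = ((L' - S.card : ℕ) : ℝ) / L' := by
      rw [Nat.cast_sub hs]; field_simp
    rw [h1p, div_pow, div_pow, div_mul_div_comm, div_mul_eq_mul_div,
      ← pow_add, Nat.add_sub_cancel' ht, mul_div_assoc, div_self (by positivity), mul_one]
  · rw [if_neg hT, if_neg hT, zero_mul]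

lemma count_false {m L' : ℕ} (hL : 1 ≤ L') (f : Finset (Fin m) → Bool) (S : Finset (Fin L')) :
    ((Finset.univ.filter (fun π : Fin m → Fin L' => f (pre π S) = false)).card : ℝ)
      = (1 - Pp f ((S.card : ℝ) / (L' : ℝ))) * (L' : ℝ) ^ m := by
  have key := Finset.card_filter_add_card_filter_not
    (s := (Finset.univ : Finset (Fin m → Fin L')))
    (p := fun π => f (pre π S) = true)
  have hneg : (Finset.univ.filter (fun π : Fin m → Fin L' => ¬ f (pre π S) = true))
      = Finset.univ.filter (fun π : Fin m → Fin L' => f (pre π S) = false) := by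
    ext π; simp
  rw [hneg] at key
  have hcard : (Finset.univ : Finset (Fin m → Fin L')).card = L' ^ m := by
    rw [Finset.card_univ, Fintype.card_fun, Fintype.card_fin, Fintype.card_fin]
  rw [hcard] at key
  have := count_true hL f S
  have keyR : ((Finset.univ.filter (fun π : Fin m → Fin L' => f (pre π S) = true)).card : ℝ)
      + ((Finset.univ.filter (fun π : Fin m → Fin L' => f (pre π S) = false)).card : ℝ)
      = (L' : ℝ) ^ m := by exact_mod_cast congrArg (Nat.cast : ℕ → ℝ) key
  linarith [this, keyR]


/-- If `P_{τ/L'}(f) > 1 - 2^{-(L'+1)}` and `P_{(τ-1)/L'}(f) < 2^{-(L'+1)}`,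
then `THR_{L',τ}` is a minor of `f`. -/
theorem thr_minor (m L' τ : ℕ) (hL : 1 ≤ L') (hτ1 : 1 ≤ τ) (hτ2 : τ ≤ L')
    (f : Finset (Fin m) → Bool) (hf : MonotoneB f)
    (h1 : 1 - 1 / 2 ^ (L' + 1) < Pp f ((τ : ℝ) / (L' : ℝ)))
    (h2 : Pp f (((τ : ℝ) - 1) / (L' : ℝ)) < 1 / 2 ^ (L' + 1)) :
    ∃ π : Fin m → Fin L', minorOf (thr L' τ) f π := by
  classical
  set ε : ℝ := 1 / 2 ^ (L' + 1) with hε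
  have hLm : (0 : ℝ) < (L' : ℝ) ^ m := by positivity
  -- the family of critical sets
  set A : Finset (Finset (Fin L')) :=
    Finset.univ.filter (fun S => S.card = τ ∨ S.card = τ - 1) with hA
  -- bad permutations for a given S
  set B : Finset (Fin L') → Finset (Fin m → Fin L') :=
    fun S => Finset.univ.filter (fun π => f (pre π S) ≠ thr L' τ S) with hB
  have hBbound : ∀ S ∈ A, ((B S).card : ℝ) < ε * (L' : ℝ) ^ m := by
    intro S hS
    rw [hA, Finset.mem_filter] at hS
    rcases hS.2 with hcard | hcard
    · -- S.card = τ, thr = true, bad means f = false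
      have hthr : thr L' τ S = true := by simp [thr, hcard]
      have hBS : B S = Finset.univ.filter (fun π : Fin m → Fin L' => f (pre π S) = false) := by
        rw [hB]; ext π; simp [hthr]
      rw [hBS, count_false hL f S, hcard]
      have : 1 - Pp f ((τ : ℝ) / (L' : ℝ)) < ε := by linarith
      exact mul_lt_mul_of_pos_right this hLm
    · -- S.card = τ - 1, thr = false, bad means f = true
      have hτ' : τ - 1 < τ := Nat.sub_lt hτ1 one_pos
      have hthr : thr L' τ S = false := by
        simp [thr, hcard]; omega
      have hBS : B S = Finset.univ.filter (fun π : Fin m → Fin L' => f (pre π S) = true) := by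
        rw [hB]; ext π; simp [hthr]
      rw [hBS, count_true hL f S, hcard]
      have hcast : ((τ - 1 : ℕ) : ℝ) = (τ : ℝ) - 1 := by
        rw [Nat.cast_sub hτ1]; norm_num
      rw [hcast]
      exact mul_lt_mul_of_pos_right h2 hLm
  -- the union of bads is small
  set Bad : Finset (Fin m → Fin L') := A.biUnion B with hBad
  have hAne : A.Nonempty := by
    obtain ⟨S, _, hScard⟩ := Finset.exists_subset_card_eq (s := (Finset.univ : Finset (Fin L')))
      (by simpa using hτ2)
    exact ⟨S, by simp [hA, hScard]⟩
  have hAcard : (A.card : ℝ) ≤ 2 ^ L' := by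
    have : A.card ≤ 2 ^ L' := by
      calc A.card ≤ (Finset.univ : Finset (Finset (Fin L'))).card :=
            Finset.card_le_card (Finset.filter_subset _ _)
        _ = 2 ^ L' := by simp
    exact_mod_cast this
  have hBadlt : (Bad.card : ℝ) < (L' : ℝ) ^ m := by
    have h1' : (Bad.card : ℝ) ≤ ∑ S ∈ A, ((B S).card : ℝ) := by
      exact_mod_cast Finset.card_biUnion_le
    have h2' : ∑ S ∈ A, ((B S).card : ℝ) < ∑ S ∈ A, ε * (L' : ℝ) ^ m :=
      Finset.sum_lt_sum_of_nonempty hAne hBbound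
    have h3' : ∑ S ∈ A, ε * (L' : ℝ) ^ m = (A.card : ℝ) * (ε * (L' : ℝ) ^ m) := by
      rw [Finset.sum_const, nsmul_eq_mul]
    have h4' : (A.card : ℝ) * (ε * (L' : ℝ) ^ m) ≤ (2 : ℝ) ^ L' * (ε * (L' : ℝ) ^ m) := by
      apply mul_le_mul_of_nonneg_right hAcard; positivity
    have h5' : (2 : ℝ) ^ L' * (ε * (L' : ℝ) ^ m) = (L' : ℝ) ^ m / 2 := by
      rw [hε]; field_simp; ring
    linarith
  -- pick a good π
  have hex : ∃ π : Fin m → Fin L', π ∉ Bad := by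
    by_contra h
    push_neg at h
    have : Bad = Finset.univ := Finset.eq_univ_iff_forall.mpr h
    rw [this, Finset.card_univ, Fintype.card_fun, Fintype.card_fin, Fintype.card_fin] at hBadlt
    exact absurd hBadlt (by push_cast; linarith)
  obtain ⟨π, hπ⟩ := hex
  have hgood : ∀ S : Finset (Fin L'), S.card = τ ∨ S.card = τ - 1 →
      f (pre π S) = thr L' τ S := by
    intro S hS
    by_contra hc
    exact hπ (Finset.mem_biUnion.mpr ⟨S, by simp [hA, hS], by simp [hB, hc]⟩)
  refine ⟨π, fun S => ?_⟩
  show thr L' τ S = f (Finset.univ.filter (fun i => π i ∈ S))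
  change thr L' τ S = f (pre π S)
  by_cases hτS : τ ≤ S.card
  · obtain ⟨S', hS'sub, hS'card⟩ := Finset.exists_subset_card_eq hτS
    have h1 : f (pre π S') = true := by
      rw [hgood S' (Or.inl hS'card)]; simp [thr, hS'card]
    have h2 : f (pre π S) = true := hf _ _ (pre_mono π hS'sub) h1
    rw [h2]; simp [thr, hτS]
  · push_neg at hτS
    obtain ⟨S'', hS''sub, hS''card⟩ := Finset.exists_superset_card_eq
      (s := S) (n := τ - 1) (by omega) (by simp; omega)
    have h1 : f (pre π S'') = false := by
      rw [hgood S'' (Or.inr hS''card)]; simp [thr, hS''card]; omega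
    have h2 : f (pre π S) = false := by
      by_contra hc
      have : f (pre π S) = true := by
        cases hfc : f (pre π S) with
        | true => rfl
        | false => exact absurd hfc hc
      have := hf _ _ (pre_mono π hS''sub) this
      rw [this] at h1; simp at h1
    rw [h2]; simp [thr]; omega
end

section
/- For every integer l with 49n/50 ≤ l ≤ 51n/50, if y = (y₂,…,y_{2n−1}) ∈ {0,1}^{2n−2} is chosen uniformly at random among vectors of Hamming weight l, then the probability that the number of indices i ∈ [n−1] with y_{2i} = y_{2i+1} = 1 is at least 49n/100 tends to 0 as n → ∞ (indeed is o(1/n)). -/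
open Finset

/-- The number of indices `i ∈ [n-1]` whose pair of positions `(2i, 2i+1)`
(1-indexed: `(y_{2i}, y_{2i+1})`) are both occupied by the set `S`. -/
def pairCount (n : ℕ) (S : Finset (Fin (2*n-2))) : ℕ :=
  (Finset.univ.filter (fun i : Fin (n-1) =>
    (⟨2*i.val, by have := i.isLt; omega⟩ : Fin (2*n-2)) ∈ S ∧
    (⟨2*i.val+1, by have := i.isLt; omega⟩ : Fin (2*n-2)) ∈ S)).card

/-- The probability that a uniformly random weight-`l` vector in `{0,1}^{2n-2}`
has at least `49n/100` fully-occupied pairs. -/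
noncomputable def badProb (n l : ℕ) : ℝ :=
  ((((Finset.univ : Finset (Finset (Fin (2*n-2)))).filter
      (fun S => S.card = l ∧ 49 * n ≤ 100 * pairCount n S)).card : ℕ) : ℝ) /
    (((2*n-2).choose l : ℕ) : ℝ)

/-!
Union bound. If `S` occupies at least `49n/100` pairs, it contains all `2k` positions of some
`k` pairs, `k = 12⌊n/25⌋`. For a fixed choice of `k` pairs, the fraction of weight-`l` sets
containing them is `C(l, 2k) / C(2n-2, 2k) = ∏_{i<2k} (l-i)/(2n-2-i)`. The first `k` factors are
at most `l/(2n-2) ≈ 1/2` and the last `k` at most `(l-k)/(2n-2-k) ≈ 1/3`, so the fraction is at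
most `5^(-k)`. There are at most `2^n` choices of pairs, and
`2^n / 5^k ≤ 2^24 (2^25/5^12)^⌊n/25⌋` decays geometrically.
-/

namespace Nat

theorem descFactorial_mul_pow_le_of_le {a b : ℕ} (hab : a ≤ b) :
    ∀ m : ℕ, a.descFactorial m * b ^ m ≤ b.descFactorial m * a ^ m
  | 0 => by simp
  | m + 1 => by
    have hstep : (a - m) * b ≤ (b - m) * a := by
      rcases le_total m a with h | h
      · zify [h, h.trans hab]; nlinarith
      · simp [Nat.sub_eq_zero_of_le h]
    calc a.descFactorial (m + 1) * b ^ (m + 1)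
        = ((a - m) * b) * (a.descFactorial m * b ^ m) := by
          rw [descFactorial_succ, pow_succ]; ring
      _ ≤ ((b - m) * a) * (b.descFactorial m * a ^ m) :=
          Nat.mul_le_mul hstep (descFactorial_mul_pow_le_of_le hab m)
      _ = b.descFactorial (m + 1) * a ^ (m + 1) := by
          rw [descFactorial_succ, pow_succ]; ring

theorem descFactorial_two_mul (a k : ℕ) :
    a.descFactorial (2 * k) = a.descFactorial k * (a - k).descFactorial k := by
  rw [← descFactorial_mul_descFactorial (show k ≤ 2 * k by omega), two_mul, Nat.add_sub_cancel,
    mul_comm]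

theorem choose_two_mul_mul_pow_le {a b c k : ℕ} (hab : a ≤ b) (h2k : 2 * k ≤ a)
    (hc : c * (a * (a - k)) ≤ b * (b - k)) :
    a.choose (2 * k) * c ^ k ≤ b.choose (2 * k) := by
  have hpos : 0 < (a * (a - k)) ^ k := by
    rcases k.eq_zero_or_pos with rfl | hk
    · simp
    · exact pow_pos (Nat.mul_pos (by omega) (by omega)) k
  have hdesc : a.descFactorial (2 * k) * (b * (b - k)) ^ k
      ≤ b.descFactorial (2 * k) * (a * (a - k)) ^ k := by
    rw [descFactorial_two_mul, descFactorial_two_mul, mul_pow, mul_pow]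
    calc a.descFactorial k * (a - k).descFactorial k * (b ^ k * (b - k) ^ k)
        = (a.descFactorial k * b ^ k) * ((a - k).descFactorial k * (b - k) ^ k) := by ring
      _ ≤ (b.descFactorial k * a ^ k) * ((b - k).descFactorial k * (a - k) ^ k) :=
          Nat.mul_le_mul (descFactorial_mul_pow_le_of_le hab k)
            (descFactorial_mul_pow_le_of_le (Nat.sub_le_sub_right hab k) k)
      _ = _ := by ring
  refine le_of_mul_le_mul_right ?_ (Nat.mul_pos (2 * k).factorial_pos hpos)
  calc a.choose (2 * k) * c ^ k * ((2 * k)! * (a * (a - k)) ^ k)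
      = a.descFactorial (2 * k) * (c * (a * (a - k))) ^ k := by
        rw [descFactorial_eq_factorial_mul_choose]; ring
    _ ≤ a.descFactorial (2 * k) * (b * (b - k)) ^ k := by gcongr
    _ ≤ b.descFactorial (2 * k) * (a * (a - k)) ^ k := hdesc
    _ = b.choose (2 * k) * ((2 * k)! * (a * (a - k)) ^ k) := by
        rw [descFactorial_eq_factorial_mul_choose]; ring

theorem choose_sub_two_mul_mul_pow_le {N l c k : ℕ} (hlN : l ≤ N) (h2k : 2 * k ≤ l)
    (hc : c * (l * (l - k)) ≤ N * (N - k)) :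
    (N - 2 * k).choose (l - 2 * k) * c ^ k ≤ N.choose l := by
  refine le_of_mul_le_mul_right ?_ (choose_pos h2k)
  calc (N - 2 * k).choose (l - 2 * k) * c ^ k * l.choose (2 * k)
      = (N - 2 * k).choose (l - 2 * k) * (l.choose (2 * k) * c ^ k) := by ring
    _ ≤ (N - 2 * k).choose (l - 2 * k) * N.choose (2 * k) :=
        Nat.mul_le_mul_left _ (choose_two_mul_mul_pow_le hlN h2k hc)
    _ = N.choose l * l.choose (2 * k) := by rw [choose_mul (n := N) h2k, mul_comm]

end Nat

section Blocks

variable {α ι : Type*} [Fintype α] [DecidableEq α] [Fintype ι]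

theorem card_filter_card_eq_and_superset_le (A : Finset α) (l : ℕ) :
    #{S : Finset α | #S = l ∧ A ⊆ S} ≤ (Fintype.card α - #A).choose (l - #A) := by
  rw [← card_compl, ← card_powersetCard]
  refine card_le_card_of_injOn (· \ A) (fun S hS => ?_) (fun S hS T hT hST => ?_)
  · simp only [coe_filter, mem_univ, true_and, Set.mem_ofPred_eq] at hS
    rw [mem_coe, mem_powersetCard, card_sdiff_of_subset hS.2, hS.1]
    exact ⟨fun x hx => mem_compl.2 (mem_sdiff.1 hx).2, rfl⟩
  · simp only [coe_filter, mem_univ, true_and, Set.mem_ofPred_eq] at hS hT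
    rw [← sdiff_union_of_subset hS.2, ← sdiff_union_of_subset hT.2]
    exact congrArg (· ∪ A) hST

theorem card_filter_le_card_blocks_subset_le {B : ι → Finset α} {m : ℕ}
    (hB : ∀ i, #(B i) = m) (hdisj : Pairwise (Function.onFun Disjoint B)) (k l : ℕ) :
    #{S : Finset α | #S = l ∧ k ≤ #{i | B i ⊆ S}}
      ≤ (Fintype.card ι).choose k * (Fintype.card α - m * k).choose (l - m * k) := by
  have hcover : ({S : Finset α | #S = l ∧ k ≤ #{i | B i ⊆ S}} : Finset (Finset α))
      ⊆ (powersetCard k univ).biUnion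
          fun T => {S : Finset α | #S = l ∧ T.biUnion B ⊆ S} := by
    intro S hS
    simp only [mem_filter, mem_univ, true_and] at hS
    obtain ⟨T, hT, hTcard⟩ := exists_subset_card_eq hS.2
    refine mem_biUnion.2 ⟨T, mem_powersetCard.2 ⟨subset_univ T, hTcard⟩, ?_⟩
    simp only [mem_filter, mem_univ, true_and, biUnion_subset]
    exact ⟨hS.1, fun i hi => (mem_filter.1 (hT hi)).2⟩
  have hblocks : ∀ T ∈ powersetCard k (univ : Finset ι), #(T.biUnion B) = m * k := by
    intro T hT
    rw [card_biUnion fun i _ j _ hij => hdisj hij, sum_congr rfl fun i _ => hB i, sum_const,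
      (mem_powersetCard.1 hT).2, smul_eq_mul, mul_comm]
  calc #{S : Finset α | #S = l ∧ k ≤ #{i | B i ⊆ S}}
      ≤ ∑ T ∈ powersetCard k univ, #{S : Finset α | #S = l ∧ T.biUnion B ⊆ S} :=
        (card_le_card hcover).trans card_biUnion_le
    _ ≤ ∑ T ∈ powersetCard k (univ : Finset ι),
          (Fintype.card α - m * k).choose (l - m * k) :=
        sum_le_sum fun T hT => hblocks T hT ▸ card_filter_card_eq_and_superset_le _ l
    _ = _ := by rw [sum_const, card_powersetCard, card_univ, smul_eq_mul]

end Blocks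

def pairBlock (n : ℕ) (i : Fin (n - 1)) : Finset (Fin (2 * n - 2)) :=
  {⟨2 * i, by omega⟩, ⟨2 * i + 1, by omega⟩}

theorem card_pairBlock (n : ℕ) (i : Fin (n - 1)) : #(pairBlock n i) = 2 :=
  card_pair (by simp [Fin.ext_iff])

theorem pairwise_disjoint_pairBlock (n : ℕ) :
    Pairwise (Function.onFun Disjoint (pairBlock n)) := by
  intro i j hij
  have hij' : i.val ≠ j.val := Fin.val_ne_of_ne hij
  rw [Function.onFun, disjoint_left]
  intro x hi hj
  simp only [pairBlock, mem_insert, mem_singleton, Fin.ext_iff] at hi hj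
  omega

theorem pairCount_eq_card_filter_pairBlock_subset (n : ℕ) (S : Finset (Fin (2 * n - 2))) :
    pairCount n S = #{i | pairBlock n i ⊆ S} := by
  simp only [pairCount, pairBlock, insert_subset_iff, singleton_subset_iff]

def badSets (n l : ℕ) : Finset (Finset (Fin (2 * n - 2))) :=
  {S | #S = l ∧ 49 * n ≤ 100 * pairCount n S}

theorem card_badSets_mul_pow_le {n l k : ℕ} (hk : 100 * k ≤ 49 * n) (hlN : l ≤ 2 * n - 2)
    (h2k : 2 * k ≤ l) (h5 : 5 * (l * (l - k)) ≤ (2 * n - 2) * (2 * n - 2 - k)) :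
    #(badSets n l) * 5 ^ k ≤ (n - 1).choose k * (2 * n - 2).choose l := by
  have hsub : #(badSets n l)
      ≤ #{S : Finset (Fin (2 * n - 2)) | #S = l ∧ k ≤ #{i | pairBlock n i ⊆ S}} := by
    refine card_le_card fun S hS => ?_
    simp only [badSets, mem_filter, mem_univ, true_and,
      ← pairCount_eq_card_filter_pairBlock_subset] at hS ⊢
    exact ⟨hS.1, by omega⟩
  have hblocks := card_filter_le_card_blocks_subset_le (card_pairBlock n)
    (pairwise_disjoint_pairBlock n) k l
  rw [Fintype.card_fin, Fintype.card_fin] at hblocks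
  calc _ ≤ (n - 1).choose k * (2 * n - 2 - 2 * k).choose (l - 2 * k) * 5 ^ k := by gcongr; omega
    _ ≤ (n - 1).choose k * (2 * n - 2).choose l := by
        rw [mul_assoc]
        exact Nat.mul_le_mul_left _ (Nat.choose_sub_two_mul_mul_pow_le hlN h2k h5)

theorem union_bound_params_of_le {n l : ℕ} (hn : 250 ≤ n) (h1 : 49 * n ≤ 50 * l)
    (h2 : 50 * l ≤ 51 * n) :
    100 * (12 * (n / 25)) ≤ 49 * n ∧ l ≤ 2 * n - 2 ∧ 2 * (12 * (n / 25)) ≤ l ∧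
      5 * (l * (l - 12 * (n / 25))) ≤ (2 * n - 2) * (2 * n - 2 - 12 * (n / 25)) := by
  obtain ⟨q, r, hr, rfl⟩ : ∃ q r, r < 25 ∧ n = 25 * q + r :=
    ⟨n / 25, n % 25, by omega, by omega⟩
  rw [show (25 * q + r) / 25 = q by omega]
  refine ⟨by omega, by omega, by omega, ?_⟩
  have hkl : 12 * q ≤ l := by omega
  zify [hkl, (by omega : 2 ≤ 2 * (25 * q + r)), (by omega : 12 * q ≤ 2 * (25 * q + r) - 2)]
  -- `5 l (l - k) ≤ 2.76 n² + O(n)` against `(2n - 2)(2n - 2 - k) ≥ 3.04 n² - O(n)`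
  have hl : (50 : ℤ) * l ≤ 51 * (25 * q + r) := by exact_mod_cast h2
  nlinarith [mul_le_mul_of_nonneg_right hl (show (0 : ℤ) ≤ l - 12 * q by omega)]

theorem badProb_nonneg (n l : ℕ) : 0 ≤ badProb n l :=
  div_nonneg (Nat.cast_nonneg _) (Nat.cast_nonneg _)

theorem badProb_le {n l : ℕ} (hn : 250 ≤ n) (h1 : 49 * n ≤ 50 * l) (h2 : 50 * l ≤ 51 * n) :
    badProb n l ≤ 2 ^ 24 * ((2 : ℝ) ^ 25 / 5 ^ 12) ^ (n / 25) := by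
  obtain ⟨hk, hlN, h2k, h5⟩ := union_bound_params_of_le hn h1 h2
  have hcount : (#(badSets n l) : ℝ) * 5 ^ (12 * (n / 25))
      ≤ 2 ^ (25 * (n / 25) + 24) * ((2 * n - 2).choose l : ℕ) := by
    exact_mod_cast (card_badSets_mul_pow_le hk hlN h2k h5).trans (Nat.mul_le_mul_right _
      ((Nat.choose_le_two_pow _ _).trans (Nat.pow_le_pow_right two_pos (by omega))))
  have hpos : (0 : ℝ) < ((2 * n - 2).choose l : ℕ) := by exact_mod_cast Nat.choose_pos hlN
  rw [show badProb n l = #(badSets n l) / ((2 * n - 2).choose l : ℕ) from rfl,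
    div_le_iff₀ hpos]
  calc _ ≤ 2 ^ (25 * (n / 25) + 24) * ((2 * n - 2).choose l : ℕ)
          / (5 : ℝ) ^ (12 * (n / 25)) :=
        (le_div_iff₀ (by positivity)).2 hcount
    _ = _ := by
        rw [pow_add, pow_mul, pow_mul, div_pow]
        field_simp

/-- For `49n/50 ≤ l ≤ 51n/50`, the probability that a uniformly random
weight-`l` vector has at least `49n/100` fully-occupied pairs is `o(1/n)`. -/
theorem bad_pair_prob_small (l : ℕ → ℕ)
    (hl : ∀ n : ℕ, 2 ≤ n → 49 * n ≤ 50 * l n ∧ 50 * l n ≤ 51 * n) :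
    Filter.Tendsto (fun n : ℕ => (n : ℝ) * badProb n (l n))
      Filter.atTop (nhds 0) := by
  set ρ : ℝ := 2 ^ 25 / 5 ^ 12
  have hρ : Filter.Tendsto (fun q : ℕ => ((q : ℝ) + 1) * ρ ^ q) Filter.atTop (nhds 0) := by
    have h := (tendsto_self_mul_const_pow_of_lt_one (r := ρ) (by positivity) (by norm_num)).add
      (tendsto_pow_atTop_nhds_zero_of_lt_one (r := ρ) (by positivity) (by norm_num))
    simpa only [add_mul, one_mul, add_zero] using h
  have hlim : Filter.Tendsto (fun n : ℕ => 2 ^ 24 * 25 * (((n / 25 : ℕ) + 1) * ρ ^ (n / 25)))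
      Filter.atTop (nhds 0) := by
    simpa only [mul_zero, Function.comp_def] using
      (hρ.comp (Nat.tendsto_div_const_atTop (by norm_num : 25 ≠ 0))).const_mul (2 ^ 24 * 25)
  refine squeeze_zero' (Filter.Eventually.of_forall fun n => ?_) ?_ hlim
  · exact mul_nonneg n.cast_nonneg (badProb_nonneg n (l n))
  · filter_upwards [Filter.eventually_ge_atTop 250] with n hn
    obtain ⟨h1, h2⟩ := hl n (by omega)
    have hn25 : (n : ℝ) ≤ 25 * ((n / 25 : ℕ) + 1) := by
      exact_mod_cast (by omega : n ≤ 25 * (n / 25 + 1))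
    calc (n : ℝ) * badProb n (l n) ≤ 25 * ((n / 25 : ℕ) + 1) * (2 ^ 24 * ρ ^ (n / 25)) :=
          mul_le_mul hn25 (badProb_le hn h1 h2) (badProb_nonneg n (l n)) (by positivity)
      _ = _ := by ring
end
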